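/- arXiv:1711.05666 — 6 statements merged into one kernel-verified Lean document; each statement's English description precedes it below -/
import Mathlib

section
/- In the *-algebra A of the deformed S⁵×S⁵ with the parameter constraints θ = −θ'₁₂ = θ'₁₃ = −θ'₂₃ = −θ'₄₅ = θ'₄₆ = −θ'₅₆, λ₁ = θ'₁₄ = θ'₂₅ = θ'₃₆, λ₂ = θ'₁₅ = θ'₂₆ = θ'₃₄, λ₃ = θ'₁₆ = θ'₂₄ = θ'₃₅, λ₁ − λ₂ = −λ₁ + λ₃ = θ, the element w = z₁z₄* + z₂z₅* + z₃z₆* commutes with its adjoint w* = z₄z₁* + z₅z₂* + z₆z₃*: w w* = w* w. -/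
open Complex Real

noncomputable def ee (t : ℝ) : ℂ := Complex.exp (2 * (Real.pi : ℂ) * Complex.I * (t : ℂ))

lemma ee_mul (s t : ℝ) : ee s * ee t = ee (s + t) := by
  unfold ee; rw [← Complex.exp_add]; congr 1; push_cast; ring

lemma ee_neg (t : ℝ) : ee (-t) = Complex.exp (-(2 * (Real.pi : ℂ) * Complex.I * (t : ℂ))) := by
  unfold ee; congr 1; push_cast; ring

lemma ee_zero : ee 0 = 1 := by simp [ee]

noncomputable def uu (A : Type*) [Ring A] [Algebra ℂ A] (t : ℝ) : A :=
  algebraMap ℂ A (ee t)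

section helpers

variable {A : Type*} [Ring A] [Algebra ℂ A]

lemma uu_mul (s t : ℝ) : uu A s * uu A t = uu A (s + t) := by
  unfold uu; rw [← map_mul, ee_mul]

lemma uu_zero : uu A 0 = 1 := by unfold uu; rw [ee_zero, map_one]

lemma uu_inv (s : ℝ) : uu A s * uu A (-s) = 1 := by
  rw [uu_mul]; have h : s + -s = 0 := by ring
  rw [h, uu_zero]

lemma uu_inv' (s : ℝ) : uu A (-s) * uu A s = 1 := by
  rw [uu_mul]; have h : -s + s = 0 := by ring
  rw [h, uu_zero]

lemma ucomm (t : ℝ) (x : A) : uu A t * x = x * uu A t := Algebra.commutes _ _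

lemma cancc (s : ℝ) (x : A) : uu A s * (uu A (-s) * x) = x := by
  rw [← mul_assoc, uu_inv, one_mul]

lemma cancc' (s : ℝ) (x : A) : uu A (-s) * (uu A s * x) = x := by
  rw [← mul_assoc, uu_inv', one_mul]

lemma smul_to_u_pos {x y : A} {s : ℝ}
    (h : x = Complex.exp (2 * (Real.pi : ℂ) * Complex.I * (s : ℂ)) • y) :
    x = uu A s * y := by
  rw [h, Algebra.smul_def]; rfl

lemma smul_to_u_neg {x y : A} {s : ℝ}
    (h : x = Complex.exp (-(2 * (Real.pi : ℂ) * Complex.I * (s : ℂ))) • y) :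
    x = uu A (-s) * y := by
  rw [h, Algebra.smul_def, ← ee_neg s]; rfl

end helpers

section starhelpers

variable {A : Type*} [Ring A] [StarRing A] [Algebra ℂ A]

lemma vcomm (t : ℝ) (x : A) : star (uu A t) * x = x * star (uu A t) := by
  calc star (uu A t) * x = star (star x * uu A t) := by rw [star_mul, star_star]
    _ = star (uu A t * star x) := congrArg star (Algebra.commutes (ee t) (star x)).symm
    _ = x * star (uu A t) := by rw [star_mul, star_star]

lemma vv_inv (s : ℝ) : star (uu A s) * star (uu A (-s)) = 1 := by
  rw [← star_mul, uu_inv', star_one]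

lemma vv_inv' (s : ℝ) : star (uu A (-s)) * star (uu A s) = 1 := by
  rw [← star_mul, uu_inv, star_one]

end starhelpers

section ringhelpers

variable {A : Type*} [Ring A]

lemma pullc {u : A} (hu : ∀ x, u * x = x * u) (x y : A) : x * (u * y) = u * (x * y) := by
  rw [← mul_assoc, ← hu, mul_assoc]

lemma swapc {x y u : A} (h : x * y = u * (y * x)) (z : A) :
    x * (y * z) = u * (y * (x * z)) := by
  rw [← mul_assoc, h, mul_assoc, mul_assoc]

lemma convc {x y p q : A} (hp : ∀ z, p * z = z * p) (hq : ∀ z, q * z = z * q)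
    (h : x * y * p = x * y * q) (z : A) :
    p * (x * (y * z)) = q * (x * (y * z)) := by
  have e : ∀ r : A, (∀ w, r * w = w * r) → r * (x * (y * z)) = (x * y * r) * z := by
    intro r hr
    rw [hr, ← mul_assoc, mul_assoc (x * y) z r, ← hr z, ← mul_assoc]
  rw [e p hp, e q hq, h]

lemma flipc {w p q p' q' : A}
    (hp : ∀ z, p * z = z * p) (hq' : ∀ z, q' * z = z * q')
    (hpp : p * p' = 1) (hqq : q * q' = 1)
    (h : w * p = w * q) : w * p' = w * q' := by
  calc w * p' = w * ((q * q') * p') := by rw [hqq, one_mul]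
    _ = (w * q) * (q' * p') := by rw [mul_assoc, mul_assoc]
    _ = (w * p) * (q' * p') := by rw [h]
    _ = w * (p * (q' * p')) := by rw [mul_assoc]
    _ = w * (q' * (p * p')) := by rw [pullc hq' p p']
    _ = w * q' := by rw [hpp, mul_one]

end ringhelpers

/-- Off-diagonal commutation: with a = z_j, b = z_{j+3}, c = z_k, d = z_{k+3},
the terms (a b*) and (d c*) commute. -/
lemma key {A : Type*} [Ring A] [StarRing A] [Algebra ℂ A]
    (a b c d : A) {s1 s2 s3 s4 s5 s6 s7 : ℝ}
    (H1 : d * star b = Complex.exp (-(2 * (Real.pi : ℂ) * Complex.I * (s1 : ℂ))) • (star b * d))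
    (H2 : c * b = Complex.exp (2 * (Real.pi : ℂ) * Complex.I * (s2 : ℂ)) • (b * c))
    (H3 : d * star c = Complex.exp (-(2 * (Real.pi : ℂ) * Complex.I * (s3 : ℂ))) • (star c * d))
    (H4 : c * star d = Complex.exp (-(2 * (Real.pi : ℂ) * Complex.I * (s4 : ℂ))) • (star d * c))
    (H5 : a * star c = Complex.exp (-(2 * (Real.pi : ℂ) * Complex.I * (s5 : ℂ))) • (star c * a))
    (H6 : c * star a = Complex.exp (-(2 * (Real.pi : ℂ) * Complex.I * (s6 : ℂ))) • (star a * c))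
    (H7 : d * a = Complex.exp (2 * (Real.pi : ℂ) * Complex.I * (s7 : ℂ)) • (a * d))
    (e34 : s3 = -s4) (e56 : s5 = -s6) (e2 : s2 = s4 + s6) (e1 : s1 = s4 + s7) :
    (a * star b) * (d * star c) = (d * star c) * (a * star b) := by
  have h1 : d * star b = uu A (-(s4 + s7)) * (star b * d) := by
    have h := smul_to_u_neg H1; rwa [e1] at h
  have h2 : c * b = uu A (s4 + s6) * (b * c) := by
    have h := smul_to_u_pos H2; rwa [e2] at h
  have h3 : d * star c = uu A s4 * (star c * d) := by
    have h := smul_to_u_neg H3; rwa [e34, neg_neg] at h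
  have h5 : a * star c = uu A s6 * (star c * a) := by
    have h := smul_to_u_neg H5; rwa [e56, neg_neg] at h
  have h4 : c * star d = uu A (-s4) * (star d * c) := smul_to_u_neg H4
  have h6 : c * star a = uu A (-s6) * (star a * c) := smul_to_u_neg H6
  have h7 : d * a = uu A s7 * (a * d) := smul_to_u_pos H7
  have L1 : star b * d = uu A (s4 + s7) * (d * star b) := by
    rw [h1, cancc]
  have SS : star b * star c = star c * (star b * star (uu A (s4 + s6))) := by
    have h := congrArg star h2
    simp only [star_mul] at h
    rw [h, mul_assoc]
  have vsplit : star (uu A (s4 + s6)) = star (uu A s6) * star (uu A s4) := by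
    rw [← uu_mul, star_mul]
  have B0 := congrArg star h4
  simp only [star_mul, star_star] at B0
  have raw1 : star c * d * star (uu A (-s4)) = star c * d * uu A s4 := by
    rw [← B0, h3]; exact Algebra.commutes _ _
  have conv1' : star c * d * star (uu A s4) = star c * d * uu A (-s4) :=
    flipc (vcomm (-s4)) (ucomm (-s4)) (vv_inv' s4) (uu_inv s4) raw1
  have conv1 : ∀ zz : A, star (uu A s4) * (star c * (d * zz))
      = uu A (-s4) * (star c * (d * zz)) :=
    convc (vcomm s4) (ucomm (-s4)) conv1'
  have C0 := congrArg star h6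
  simp only [star_mul, star_star] at C0
  have raw2 : star c * a * star (uu A (-s6)) = star c * a * uu A s6 := by
    rw [← C0, h5]; exact Algebra.commutes _ _
  have conv2' : star c * a * star (uu A s6) = star c * a * uu A (-s6) :=
    flipc (vcomm (-s6)) (ucomm (-s6)) (vv_inv' s6) (uu_inv s6) raw2
  have conv2 : ∀ zz : A, star (uu A s6) * (star c * (a * zz))
      = uu A (-s6) * (star c * (a * zz)) :=
    convc (vcomm s6) (ucomm (-s6)) conv2'
  have RHS : d * star c * (a * star b) = uu A (s4 + s7) * (star c * (a * (d * star b))) := by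
    calc d * star c * (a * star b)
        = uu A s4 * (star c * d) * (a * star b) := by rw [h3]
      _ = uu A s4 * (star c * (d * (a * star b))) := by rw [mul_assoc, mul_assoc]
      _ = uu A s4 * (star c * (uu A s7 * (a * (d * star b)))) := by rw [swapc h7 (star b)]
      _ = uu A s4 * (uu A s7 * (star c * (a * (d * star b)))) := by
            rw [pullc (ucomm s7) (star c) (a * (d * star b))]
      _ = uu A (s4 + s7) * (star c * (a * (d * star b))) := by rw [← mul_assoc, uu_mul]
  have LHS : a * star b * (d * star c) = uu A (s4 + s7) * (star c * (a * (d * star b))) := by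
    calc a * star b * (d * star c)
        = a * (star b * (d * star c)) := by rw [mul_assoc]
      _ = a * (uu A (s4 + s7) * (d * (star b * star c))) := by rw [swapc L1 (star c)]
      _ = uu A (s4 + s7) * (a * (d * (star b * star c))) := by
            rw [pullc (ucomm (s4 + s7)) a (d * (star b * star c))]
      _ = uu A (s4 + s7) * (a * (d * (star c * (star b * (star (uu A s6) * star (uu A s4)))))) := by
            rw [SS, vsplit]
      _ = uu A (s4 + s7) * (a * (d * (star c * (star b * (star (uu A s4) * star (uu A s6)))))) := by
            rw [vcomm s6 (star (uu A s4))]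
      _ = uu A (s4 + s7) * (a * (d * (star c * (star (uu A s4) * (star b * star (uu A s6)))))) := by
            rw [pullc (vcomm s4) (star b) (star (uu A s6))]
      _ = uu A (s4 + s7) * (a * (uu A s4 * (star c * (d * (star (uu A s4) * (star b * star (uu A s6))))))) := by
            rw [swapc h3 (star (uu A s4) * (star b * star (uu A s6)))]
      _ = uu A (s4 + s7) * (uu A s4 * (a * (star c * (d * (star (uu A s4) * (star b * star (uu A s6))))))) := by
            rw [pullc (ucomm s4) a (star c * (d * (star (uu A s4) * (star b * star (uu A s6)))))]
      _ = uu A (s4 + s7) * (uu A s4 * (a * (star c * (star (uu A s4) * (d * (star b * star (uu A s6))))))) := by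
            rw [pullc (vcomm s4) d (star b * star (uu A s6))]
      _ = uu A (s4 + s7) * (uu A s4 * (a * (star (uu A s4) * (star c * (d * (star b * star (uu A s6))))))) := by
            rw [pullc (vcomm s4) (star c) (d * (star b * star (uu A s6)))]
      _ = uu A (s4 + s7) * (uu A s4 * (a * (uu A (-s4) * (star c * (d * (star b * star (uu A s6))))))) := by
            rw [conv1 (star b * star (uu A s6))]
      _ = uu A (s4 + s7) * (uu A s4 * (uu A (-s4) * (a * (star c * (d * (star b * star (uu A s6))))))) := by
            rw [pullc (ucomm (-s4)) a (star c * (d * (star b * star (uu A s6))))]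
      _ = uu A (s4 + s7) * (a * (star c * (d * (star b * star (uu A s6))))) := by rw [cancc]
      _ = uu A (s4 + s7) * (uu A s6 * (star c * (a * (d * (star b * star (uu A s6)))))) := by
            rw [swapc h5 (d * (star b * star (uu A s6)))]
      _ = uu A (s4 + s7) * (uu A s6 * (star c * (a * (d * (star (uu A s6) * star b))))) := by
            rw [← vcomm s6 (star b)]
      _ = uu A (s4 + s7) * (uu A s6 * (star c * (a * (star (uu A s6) * (d * star b))))) := by
            rw [pullc (vcomm s6) d (star b)]
      _ = uu A (s4 + s7) * (uu A s6 * (star c * (star (uu A s6) * (a * (d * star b))))) := by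
            rw [pullc (vcomm s6) a (d * star b)]
      _ = uu A (s4 + s7) * (uu A s6 * (star (uu A s6) * (star c * (a * (d * star b))))) := by
            rw [pullc (vcomm s6) (star c) (a * (d * star b))]
      _ = uu A (s4 + s7) * (uu A s6 * (uu A (-s6) * (star c * (a * (d * star b))))) := by
            rw [conv2 (d * star b)]
      _ = uu A (s4 + s7) * (star c * (a * (d * star b))) := by rw [cancc]
  exact LHS.trans RHS.symm

/-- Diagonal commutation: (a b*) commutes with (b a*). -/
lemma keyd {A : Type*} [Ring A] [StarRing A] [Algebra ℂ A]
    (a b : A) {t1 t2 : ℝ}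
    (Hab : a * b = Complex.exp (2 * (Real.pi : ℂ) * Complex.I * (t1 : ℂ)) • (b * a))
    (H1 : a * star b = Complex.exp (-(2 * (Real.pi : ℂ) * Complex.I * (t1 : ℂ))) • (star b * a))
    (H2 : b * star a = Complex.exp (-(2 * (Real.pi : ℂ) * Complex.I * (t2 : ℂ))) • (star a * b))
    (et : t2 = -t1)
    (hna : a * star a = star a * a) (hnb : b * star b = star b * b) :
    (a * star b) * (b * star a) = (b * star a) * (a * star b) := by
  have h2 : b * star a = uu A t1 * (star a * b) := by
    have h := smul_to_u_neg H2; rwa [et, neg_neg] at h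
  have hab : a * b = uu A t1 * (b * a) := smul_to_u_pos Hab
  have h1 : a * star b = uu A (-t1) * (star b * a) := smul_to_u_neg H1
  have hba : b * a = uu A (-t1) * (a * b) := by rw [hab, cancc']
  have SS : star b * star a = star a * (star b * star (uu A t1)) := by
    have h := congrArg star hab
    simp only [star_mul] at h
    rw [h, mul_assoc]
  have B0 := congrArg star h1
  simp only [star_mul, star_star] at B0
  have raw : star a * b * star (uu A (-t1)) = star a * b * uu A t1 := by
    rw [← B0, h2]; exact Algebra.commutes _ _
  have conv' : star a * b * star (uu A t1) = star a * b * uu A (-t1) :=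
    flipc (vcomm (-t1)) (ucomm (-t1)) (vv_inv' t1) (uu_inv t1) raw
  have convd : ∀ zz : A, star (uu A t1) * (star a * (b * zz))
      = uu A (-t1) * (star a * (b * zz)) :=
    convc (vcomm t1) (ucomm (-t1)) conv'
  have hnb' : star b * b = b * star b := hnb.symm
  have hna' : star a * a = a * star a := hna.symm
  have LHS : a * star b * (b * star a) = a * (star a * (b * star b)) := by
    calc a * star b * (b * star a)
        = a * (star b * (b * star a)) := by rw [mul_assoc]
      _ = a * ((star b * b) * star a) := by rw [← mul_assoc (star b) b (star a)]
      _ = a * ((b * star b) * star a) := by rw [hnb']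
      _ = a * (b * (star b * star a)) := by rw [mul_assoc b (star b) (star a)]
      _ = a * (b * (star a * (star b * star (uu A t1)))) := by rw [SS]
      _ = a * (uu A t1 * (star a * (b * (star b * star (uu A t1))))) := by
            rw [swapc h2 (star b * star (uu A t1))]
      _ = uu A t1 * (a * (star a * (b * (star b * star (uu A t1))))) := by
            rw [pullc (ucomm t1) a (star a * (b * (star b * star (uu A t1))))]
      _ = uu A t1 * (a * (star a * (b * (star (uu A t1) * star b)))) := by
            rw [← vcomm t1 (star b)]
      _ = uu A t1 * (a * (star a * (star (uu A t1) * (b * star b)))) := by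
            rw [pullc (vcomm t1) b (star b)]
      _ = uu A t1 * (a * (star (uu A t1) * (star a * (b * star b)))) := by
            rw [pullc (vcomm t1) (star a) (b * star b)]
      _ = uu A t1 * (a * (uu A (-t1) * (star a * (b * star b)))) := by rw [convd (star b)]
      _ = uu A t1 * (uu A (-t1) * (a * (star a * (b * star b)))) := by
            rw [pullc (ucomm (-t1)) a (star a * (b * star b))]
      _ = a * (star a * (b * star b)) := by rw [cancc]
  have RHS : b * star a * (a * star b) = a * (star a * (b * star b)) := by
    calc b * star a * (a * star b)
        = b * (star a * (a * star b)) := by rw [mul_assoc]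
      _ = b * ((star a * a) * star b) := by rw [← mul_assoc (star a) a (star b)]
      _ = b * ((a * star a) * star b) := by rw [hna']
      _ = b * (a * (star a * star b)) := by rw [mul_assoc a (star a) (star b)]
      _ = uu A (-t1) * (a * (b * (star a * star b))) := by rw [swapc hba (star a * star b)]
      _ = uu A (-t1) * (a * (uu A t1 * (star a * (b * star b)))) := by rw [swapc h2 (star b)]
      _ = uu A (-t1) * (uu A t1 * (a * (star a * (b * star b)))) := by
            rw [pullc (ucomm t1) a (star a * (b * star b))]
      _ = a * (star a * (b * star b)) := by rw [cancc']
  exact LHS.trans RHS.symm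

/-- w = z₁z₄* + z₂z₅* + z₃z₆* commutes with its adjoint w*. -/
theorem w_normal
    {A : Type*} [Ring A] [StarRing A] [Algebra ℂ A]
    (θ' : Fin 6 → Fin 6 → ℝ) (θ lam1 lam2 lam3 : ℝ) (z : Fin 6 → A)
    (hskew : ∀ j k, θ' j k = -θ' k j)
    (hnormal : ∀ j, z j * star (z j) = star (z j) * z j)
    (hzz : ∀ j k, z j * z k =
      Complex.exp (2 * (Real.pi : ℂ) * Complex.I * (θ' j k : ℂ)) • (z k * z j))
    (hzzs : ∀ j k, j ≠ k → z j * star (z k) =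
      Complex.exp (-(2 * (Real.pi : ℂ) * Complex.I * (θ' j k : ℂ))) • (star (z k) * z j))
    (h12 : θ' 0 1 = -θ) (h13 : θ' 0 2 = θ) (h23 : θ' 1 2 = -θ)
    (h45 : θ' 3 4 = -θ) (h46 : θ' 3 5 = θ) (h56 : θ' 4 5 = -θ)
    (h14 : θ' 0 3 = lam1) (h25 : θ' 1 4 = lam1) (h36 : θ' 2 5 = lam1)
    (h15 : θ' 0 4 = lam2) (h26 : θ' 1 5 = lam2) (h34 : θ' 2 3 = lam2)
    (h16 : θ' 0 5 = lam3) (h24 : θ' 1 3 = lam3) (h35 : θ' 2 4 = lam3)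
    (hlam12 : lam1 - lam2 = θ) (hlam13 : -lam1 + lam3 = θ)
    (w : A) (hw : w = z 0 * star (z 3) + z 1 * star (z 4) + z 2 * star (z 5)) :
    w * star w = star w * w := by
  -- diagonal commutations
  have c00 : (z 0 * star (z 3)) * (z 3 * star (z 0)) = (z 3 * star (z 0)) * (z 0 * star (z 3)) :=
    keyd (z 0) (z 3) (hzz 0 3) (hzzs 0 3 (by decide)) (hzzs 3 0 (by decide))
      (hskew 3 0) (hnormal 0) (hnormal 3)
  have c11 : (z 1 * star (z 4)) * (z 4 * star (z 1)) = (z 4 * star (z 1)) * (z 1 * star (z 4)) :=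
    keyd (z 1) (z 4) (hzz 1 4) (hzzs 1 4 (by decide)) (hzzs 4 1 (by decide))
      (hskew 4 1) (hnormal 1) (hnormal 4)
  have c22 : (z 2 * star (z 5)) * (z 5 * star (z 2)) = (z 5 * star (z 2)) * (z 2 * star (z 5)) :=
    keyd (z 2) (z 5) (hzz 2 5) (hzzs 2 5 (by decide)) (hzzs 5 2 (by decide))
      (hskew 5 2) (hnormal 2) (hnormal 5)
  -- off-diagonal commutations
  have c01 : (z 0 * star (z 3)) * (z 4 * star (z 1)) = (z 4 * star (z 1)) * (z 0 * star (z 3)) :=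
    key (z 0) (z 3) (z 1) (z 4)
      (hzzs 4 3 (by decide)) (hzz 1 3) (hzzs 4 1 (by decide)) (hzzs 1 4 (by decide))
      (hzzs 0 1 (by decide)) (hzzs 1 0 (by decide)) (hzz 4 0)
      (hskew 4 1) (hskew 0 1)
      (by rw [h24, h25, hskew 1 0, h12]; linarith [hlam12, hlam13])
      (by rw [hskew 4 3, h45, h25, hskew 4 0, h15]; linarith [hlam12, hlam13])
  have c02 : (z 0 * star (z 3)) * (z 5 * star (z 2)) = (z 5 * star (z 2)) * (z 0 * star (z 3)) :=
    key (z 0) (z 3) (z 2) (z 5)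
      (hzzs 5 3 (by decide)) (hzz 2 3) (hzzs 5 2 (by decide)) (hzzs 2 5 (by decide))
      (hzzs 0 2 (by decide)) (hzzs 2 0 (by decide)) (hzz 5 0)
      (hskew 5 2) (hskew 0 2)
      (by rw [h34, h36, hskew 2 0, h13]; linarith [hlam12, hlam13])
      (by rw [hskew 5 3, h46, h36, hskew 5 0, h16]; linarith [hlam12, hlam13])
  have c10 : (z 1 * star (z 4)) * (z 3 * star (z 0)) = (z 3 * star (z 0)) * (z 1 * star (z 4)) :=
    key (z 1) (z 4) (z 0) (z 3)
      (hzzs 3 4 (by decide)) (hzz 0 4) (hzzs 3 0 (by decide)) (hzzs 0 3 (by decide))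
      (hzzs 1 0 (by decide)) (hzzs 0 1 (by decide)) (hzz 3 1)
      (hskew 3 0) (hskew 1 0)
      (by rw [h15, h14, h12]; linarith [hlam12, hlam13])
      (by rw [h45, h14, hskew 3 1, h24]; linarith [hlam12, hlam13])
  have c12 : (z 1 * star (z 4)) * (z 5 * star (z 2)) = (z 5 * star (z 2)) * (z 1 * star (z 4)) :=
    key (z 1) (z 4) (z 2) (z 5)
      (hzzs 5 4 (by decide)) (hzz 2 4) (hzzs 5 2 (by decide)) (hzzs 2 5 (by decide))
      (hzzs 1 2 (by decide)) (hzzs 2 1 (by decide)) (hzz 5 1)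
      (hskew 5 2) (hskew 1 2)
      (by rw [h35, h36, hskew 2 1, h23]; linarith [hlam12, hlam13])
      (by rw [hskew 5 4, h56, h36, hskew 5 1, h26]; linarith [hlam12, hlam13])
  have c20 : (z 2 * star (z 5)) * (z 3 * star (z 0)) = (z 3 * star (z 0)) * (z 2 * star (z 5)) :=
    key (z 2) (z 5) (z 0) (z 3)
      (hzzs 3 5 (by decide)) (hzz 0 5) (hzzs 3 0 (by decide)) (hzzs 0 3 (by decide))
      (hzzs 2 0 (by decide)) (hzzs 0 2 (by decide)) (hzz 3 2)
      (hskew 3 0) (hskew 2 0)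
      (by rw [h16, h14, h13]; linarith [hlam12, hlam13])
      (by rw [h46, h14, hskew 3 2, h34]; linarith [hlam12, hlam13])
  have c21 : (z 2 * star (z 5)) * (z 4 * star (z 1)) = (z 4 * star (z 1)) * (z 2 * star (z 5)) :=
    key (z 2) (z 5) (z 1) (z 4)
      (hzzs 4 5 (by decide)) (hzz 1 5) (hzzs 4 1 (by decide)) (hzzs 1 4 (by decide))
      (hzzs 2 1 (by decide)) (hzzs 1 2 (by decide)) (hzz 4 2)
      (hskew 4 1) (hskew 2 1)
      (by rw [h26, h25, h23]; linarith [hlam12, hlam13])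
      (by rw [h56, h25, hskew 4 2, h35]; linarith [hlam12, hlam13])
  rw [hw]
  have hsw : star (z 0 * star (z 3) + z 1 * star (z 4) + z 2 * star (z 5))
      = z 3 * star (z 0) + z 4 * star (z 1) + z 5 * star (z 2) := by
    simp only [star_add, star_mul, star_star]
  rw [hsw]
  have r0 : Commute (z 0 * star (z 3))
      (z 3 * star (z 0) + z 4 * star (z 1) + z 5 * star (z 2)) :=
    Commute.add_right (Commute.add_right c00 c01) c02
  have r1 : Commute (z 1 * star (z 4))
      (z 3 * star (z 0) + z 4 * star (z 1) + z 5 * star (z 2)) :=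
    Commute.add_right (Commute.add_right c10 c11) c12
  have r2 : Commute (z 2 * star (z 5))
      (z 3 * star (z 0) + z 4 * star (z 1) + z 5 * star (z 2)) :=
    Commute.add_right (Commute.add_right c20 c21) c22
  exact (Commute.add_left (Commute.add_left r0 r1) r2).eq
end

section
/- Under the same hypotheses on A and the parameters (θ'-constraints with λ₁ − λ₂ = −λ₁ + λ₃ = θ), the element w = z₁z₄* + z₂z₅* + z₃z₆* satisfies z₁ w = exp(−2π i λ₁) w z₁. -/
open Complex Real

/-- z₁ w = exp(−2πiλ₁) w z₁ for w = z₁z₄* + z₂z₅* + z₃z₆*. -/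
theorem z1_w_commutation
    {A : Type*} [Ring A] [StarRing A] [Algebra ℂ A]
    (θ' : Fin 6 → Fin 6 → ℝ) (θ lam1 lam2 lam3 : ℝ) (z : Fin 6 → A)
    (hskew : ∀ j k, θ' j k = -θ' k j)
    (hnormal : ∀ j, z j * star (z j) = star (z j) * z j)
    (hzz : ∀ j k, z j * z k =
      Complex.exp (2 * (Real.pi : ℂ) * Complex.I * (θ' j k : ℂ)) • (z k * z j))
    (hzzs : ∀ j k, j ≠ k → z j * star (z k) =
      Complex.exp (-(2 * (Real.pi : ℂ) * Complex.I * (θ' j k : ℂ))) • (star (z k) * z j))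
    (h12 : θ' 0 1 = -θ) (h13 : θ' 0 2 = θ) (h23 : θ' 1 2 = -θ)
    (h45 : θ' 3 4 = -θ) (h46 : θ' 3 5 = θ) (h56 : θ' 4 5 = -θ)
    (h14 : θ' 0 3 = lam1) (h25 : θ' 1 4 = lam1) (h36 : θ' 2 5 = lam1)
    (h15 : θ' 0 4 = lam2) (h26 : θ' 1 5 = lam2) (h34 : θ' 2 3 = lam2)
    (h16 : θ' 0 5 = lam3) (h24 : θ' 1 3 = lam3) (h35 : θ' 2 4 = lam3)
    (hlam12 : lam1 - lam2 = θ) (hlam13 : -lam1 + lam3 = θ)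
    (w : A) (hw : w = z 0 * star (z 3) + z 1 * star (z 4) + z 2 * star (z 5)) :
    z 0 * w = Complex.exp (-(2 * (Real.pi : ℂ) * Complex.I * (lam1 : ℂ))) • (w * z 0) := by
  have h03 := hzzs 0 3 (by decide)
  have h04 := hzzs 0 4 (by decide)
  have h05 := hzzs 0 5 (by decide)
  have h01 := hzz 0 1
  have h02 := hzz 0 2
  rw [h14] at h03
  rw [h15] at h04
  rw [h16] at h05
  rw [h12] at h01
  rw [h13] at h02
  have t1 : z 0 * (z 0 * star (z 3)) =
      Complex.exp (-(2 * (Real.pi : ℂ) * Complex.I * (lam1 : ℂ))) • ((z 0 * star (z 3)) * z 0) := by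
    conv_lhs => rw [h03]
    rw [mul_smul_comm, ← mul_assoc]
  have key2 : Complex.exp (2 * (Real.pi : ℂ) * Complex.I * ((-θ : ℝ) : ℂ)) *
      Complex.exp (-(2 * (Real.pi : ℂ) * Complex.I * (lam2 : ℂ))) =
      Complex.exp (-(2 * (Real.pi : ℂ) * Complex.I * (lam1 : ℂ))) := by
    rw [← Complex.exp_add]
    congr 1
    have : (lam1 : ℂ) = (θ : ℂ) + (lam2 : ℂ) := by
      have : lam1 = θ + lam2 := by linarith
      rw [this]; push_cast; ring
    rw [this]; push_cast; ring
  have key3 : Complex.exp (2 * (Real.pi : ℂ) * Complex.I * ((θ : ℝ) : ℂ)) *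
      Complex.exp (-(2 * (Real.pi : ℂ) * Complex.I * (lam3 : ℂ))) =
      Complex.exp (-(2 * (Real.pi : ℂ) * Complex.I * (lam1 : ℂ))) := by
    rw [← Complex.exp_add]
    congr 1
    have : (lam1 : ℂ) = (lam3 : ℂ) - (θ : ℂ) := by
      have : lam1 = lam3 - θ := by linarith
      rw [this]; push_cast; ring
    rw [this]; push_cast; ring
  have t2 : z 0 * (z 1 * star (z 4)) =
      Complex.exp (-(2 * (Real.pi : ℂ) * Complex.I * (lam1 : ℂ))) • ((z 1 * star (z 4)) * z 0) := by
    rw [← mul_assoc, h01, smul_mul_assoc, mul_assoc (z 1), h04, mul_smul_comm, smul_smul, key2,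
      ← mul_assoc]
  have t3 : z 0 * (z 2 * star (z 5)) =
      Complex.exp (-(2 * (Real.pi : ℂ) * Complex.I * (lam1 : ℂ))) • ((z 2 * star (z 5)) * z 0) := by
    rw [← mul_assoc, h02, smul_mul_assoc, mul_assoc (z 2), h05, mul_smul_comm, smul_smul, key3,
      ← mul_assoc]
  subst hw
  rw [mul_add, mul_add, add_mul, add_mul, smul_add, smul_add, t1, t2, t3]
end

section
/- Under the same hypotheses, for every j ∈ {1,…,6} the element w = z₁z₄* + z₂z₅* + z₃z₆* satisfies z_j w = exp(−2π i λ₁) w z_j and z_j w* = exp(2π i λ₁) w* z_j. -/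
open Complex Real

/-- for every j, z_j w = exp(−2πiλ₁) w z_j and z_j w* = exp(2πiλ₁) w* z_j. -/
theorem zj_w_commutation
    {A : Type*} [Ring A] [StarRing A] [Algebra ℂ A]
    (θ' : Fin 6 → Fin 6 → ℝ) (θ lam1 lam2 lam3 : ℝ) (z : Fin 6 → A)
    (hskew : ∀ j k, θ' j k = -θ' k j)
    (hnormal : ∀ j, z j * star (z j) = star (z j) * z j)
    (hzz : ∀ j k, z j * z k =
      Complex.exp (2 * (Real.pi : ℂ) * Complex.I * (θ' j k : ℂ)) • (z k * z j))
    (hzzs : ∀ j k, j ≠ k → z j * star (z k) =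
      Complex.exp (-(2 * (Real.pi : ℂ) * Complex.I * (θ' j k : ℂ))) • (star (z k) * z j))
    (h12 : θ' 0 1 = -θ) (h13 : θ' 0 2 = θ) (h23 : θ' 1 2 = -θ)
    (h45 : θ' 3 4 = -θ) (h46 : θ' 3 5 = θ) (h56 : θ' 4 5 = -θ)
    (h14 : θ' 0 3 = lam1) (h25 : θ' 1 4 = lam1) (h36 : θ' 2 5 = lam1)
    (h15 : θ' 0 4 = lam2) (h26 : θ' 1 5 = lam2) (h34 : θ' 2 3 = lam2)
    (h16 : θ' 0 5 = lam3) (h24 : θ' 1 3 = lam3) (h35 : θ' 2 4 = lam3)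
    (hlam12 : lam1 - lam2 = θ) (hlam13 : -lam1 + lam3 = θ)
    (w : A) (hw : w = z 0 * star (z 3) + z 1 * star (z 4) + z 2 * star (z 5)) :
    ∀ j : Fin 6,
      z j * w = Complex.exp (-(2 * (Real.pi : ℂ) * Complex.I * (lam1 : ℂ))) • (w * z j) ∧
      z j * star w = Complex.exp (2 * (Real.pi : ℂ) * Complex.I * (lam1 : ℂ)) • (star w * z j) := by
  have hd : ∀ j : Fin 6, θ' j j = 0 := fun j => by have := hskew j j; linarith
  -- key commutation for a single term
  have key : ∀ j k l : Fin 6, z j * (z k * star (z l)) =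
      Complex.exp (2 * (Real.pi : ℂ) * Complex.I * ((θ' j k - θ' j l : ℝ) : ℂ)) •
        ((z k * star (z l)) * z j) := by
    intro j k l
    by_cases hjl : j = l
    · subst hjl
      rw [← mul_assoc, hzz, smul_mul_assoc, mul_assoc (z k), hnormal, ← mul_assoc (z k)]
      congr 2
      rw [hd]
      push_cast
      ring
    · rw [← mul_assoc, hzz, smul_mul_assoc, mul_assoc (z k), hzzs j l hjl, mul_smul_comm,
        smul_smul, ← Complex.exp_add, ← mul_assoc (z k)]
      congr 2
      push_cast
      ring
  have hws : star w = z 3 * star (z 0) + z 4 * star (z 1) + z 5 * star (z 2) := by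
    rw [hw]
    simp [star_add, star_mul]
  have mainw : ∀ j : Fin 6, θ' j 0 - θ' j 3 = -lam1 → θ' j 1 - θ' j 4 = -lam1 →
      θ' j 2 - θ' j 5 = -lam1 →
      z j * w = Complex.exp (-(2 * (Real.pi : ℂ) * Complex.I * (lam1 : ℂ))) • (w * z j) := by
    intro j h1 h2 h3
    have e : Complex.exp (-(2 * (Real.pi : ℂ) * Complex.I * (lam1 : ℂ))) =
        Complex.exp (2 * (Real.pi : ℂ) * Complex.I * (((-lam1 : ℝ)) : ℂ)) := by
      push_cast; ring_nf
    rw [e, hw, mul_add, mul_add, add_mul, add_mul, key, key, key, h1, h2, h3,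
      smul_add, smul_add]
  have mainws : ∀ j : Fin 6, θ' j 3 - θ' j 0 = lam1 → θ' j 4 - θ' j 1 = lam1 →
      θ' j 5 - θ' j 2 = lam1 →
      z j * star w = Complex.exp (2 * (Real.pi : ℂ) * Complex.I * (lam1 : ℂ)) • (star w * z j) := by
    intro j h1 h2 h3
    have e : Complex.exp (2 * (Real.pi : ℂ) * Complex.I * (lam1 : ℂ)) =
        Complex.exp (2 * (Real.pi : ℂ) * Complex.I * (((lam1 : ℝ)) : ℂ)) := rfl
    rw [e, hws, mul_add, mul_add, add_mul, add_mul, key, key, key, h1, h2, h3,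
      smul_add, smul_add]
  have d0 := hd 0; have d1 := hd 1; have d2 := hd 2
  have d3 := hd 3; have d4 := hd 4; have d5 := hd 5
  have g10 := hskew 1 0; have g20 := hskew 2 0; have g21 := hskew 2 1
  have g30 := hskew 3 0; have g31 := hskew 3 1; have g32 := hskew 3 2
  have g40 := hskew 4 0; have g41 := hskew 4 1; have g42 := hskew 4 2
  have g43 := hskew 4 3; have g50 := hskew 5 0; have g51 := hskew 5 1
  have g52 := hskew 5 2; have g53 := hskew 5 3; have g54 := hskew 5 4
  intro j
  fin_cases j
  · exact ⟨mainw 0 (by linarith) (by linarith) (by linarith),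
      mainws 0 (by linarith) (by linarith) (by linarith)⟩
  · exact ⟨mainw 1 (by linarith) (by linarith) (by linarith),
      mainws 1 (by linarith) (by linarith) (by linarith)⟩
  · exact ⟨mainw 2 (by linarith) (by linarith) (by linarith),
      mainws 2 (by linarith) (by linarith) (by linarith)⟩
  · exact ⟨mainw 3 (by linarith) (by linarith) (by linarith),
      mainws 3 (by linarith) (by linarith) (by linarith)⟩
  · exact ⟨mainw 4 (by linarith) (by linarith) (by linarith),
      mainws 4 (by linarith) (by linarith) (by linarith)⟩
  · exact ⟨mainw 5 (by linarith) (by linarith) (by linarith),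
      mainws 5 (by linarith) (by linarith) (by linarith)⟩
end

section
/- Under the same hypotheses, and additionally imposing the sphere relations z₁z₁* + z₂z₂* + z₃z₃* = 1 and z₄z₄* + z₅z₅* + z₆z₆* = 1, the elements w w* and w* w are central: they commute with every generator z_j (j = 1,…,6). -/
open Complex Real

/-- with the sphere relations added, w w* and w* w are central:
they commute with every generator z_j. -/
theorem wws_central
    {A : Type*} [Ring A] [StarRing A] [Algebra ℂ A]
    (θ' : Fin 6 → Fin 6 → ℝ) (θ lam1 lam2 lam3 : ℝ) (z : Fin 6 → A)
    (hskew : ∀ j k, θ' j k = -θ' k j)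
    (hnormal : ∀ j, z j * star (z j) = star (z j) * z j)
    (hzz : ∀ j k, z j * z k =
      Complex.exp (2 * (Real.pi : ℂ) * Complex.I * (θ' j k : ℂ)) • (z k * z j))
    (hzzs : ∀ j k, j ≠ k → z j * star (z k) =
      Complex.exp (-(2 * (Real.pi : ℂ) * Complex.I * (θ' j k : ℂ))) • (star (z k) * z j))
    (h12 : θ' 0 1 = -θ) (h13 : θ' 0 2 = θ) (h23 : θ' 1 2 = -θ)
    (h45 : θ' 3 4 = -θ) (h46 : θ' 3 5 = θ) (h56 : θ' 4 5 = -θ)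
    (h14 : θ' 0 3 = lam1) (h25 : θ' 1 4 = lam1) (h36 : θ' 2 5 = lam1)
    (h15 : θ' 0 4 = lam2) (h26 : θ' 1 5 = lam2) (h34 : θ' 2 3 = lam2)
    (h16 : θ' 0 5 = lam3) (h24 : θ' 1 3 = lam3) (h35 : θ' 2 4 = lam3)
    (hlam12 : lam1 - lam2 = θ) (hlam13 : -lam1 + lam3 = θ)
    (hsph1 : z 0 * star (z 0) + z 1 * star (z 1) + z 2 * star (z 2) = 1)
    (hsph2 : z 3 * star (z 3) + z 4 * star (z 4) + z 5 * star (z 5) = 1)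
    (w : A) (hw : w = z 0 * star (z 3) + z 1 * star (z 4) + z 2 * star (z 5)) :
    ∀ j : Fin 6,
      z j * (w * star w) = (w * star w) * z j ∧
      z j * (star w * w) = (star w * w) * z j := by
  have hzero : ∀ j, θ' j j = 0 := fun j => by have := hskew j j; linarith
  set c : ℝ → ℂ := fun t => Complex.exp (2 * (Real.pi : ℂ) * Complex.I * (t : ℂ)) with hc
  have hcmul : ∀ s t : ℝ, c s * c t = c (s + t) := by
    intro s t
    simp only [hc, ← Complex.exp_add]
    congr 1
    push_cast
    ring
  have hexp : ∀ t : ℝ, Complex.exp (-(2 * (Real.pi : ℂ) * Complex.I * (t : ℂ))) = c (-t) := by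
    intro t
    simp only [hc]
    congr 1
    push_cast
    ring
  have hone : ∀ t : ℝ, c (-t) * c t = 1 := by
    intro t
    rw [hcmul]
    simp [hc]
  -- single-term commutation
  have hterm : ∀ (j a b : Fin 6), a ≠ b →
      z j * (z a * star (z b)) = c (θ' j a - θ' j b) • ((z a * star (z b)) * z j) := by
    intro j a b hab
    by_cases hjb : j = b
    · subst hjb
      have : θ' j a - θ' j j = θ' j a := by rw [hzero]; ring
      rw [this]
      calc z j * (z a * star (z j)) = (z j * z a) * star (z j) := by rw [mul_assoc]
        _ = (c (θ' j a) • (z a * z j)) * star (z j) := by rw [hzz j a]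
        _ = c (θ' j a) • (z a * (z j * star (z j))) := by
              rw [smul_mul_assoc, mul_assoc]
        _ = c (θ' j a) • (z a * (star (z j) * z j)) := by rw [hnormal j]
        _ = c (θ' j a) • ((z a * star (z j)) * z j) := by rw [mul_assoc]
    · calc z j * (z a * star (z b)) = (z j * z a) * star (z b) := by rw [mul_assoc]
        _ = (c (θ' j a) • (z a * z j)) * star (z b) := by rw [hzz j a]
        _ = c (θ' j a) • (z a * (z j * star (z b))) := by
              rw [smul_mul_assoc, mul_assoc]
        _ = c (θ' j a) • (z a * (c (-θ' j b) • (star (z b) * z j))) := by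
              rw [hzzs j b hjb, hexp]
        _ = (c (θ' j a) * c (-θ' j b)) • ((z a * star (z b)) * z j) := by
              rw [mul_smul_comm, smul_smul, mul_assoc]
        _ = c (θ' j a - θ' j b) • ((z a * star (z b)) * z j) := by
              rw [hcmul, show θ' j a + -θ' j b = θ' j a - θ' j b from by ring]
  -- the exponent table
  have table : ∀ j : Fin 6,
      θ' j 0 - θ' j 3 = -lam1 ∧ θ' j 1 - θ' j 4 = -lam1 ∧ θ' j 2 - θ' j 5 = -lam1 := by
    have tac : True := trivial
    have t0 : θ' 0 0 - θ' 0 3 = -lam1 ∧ θ' 0 1 - θ' 0 4 = -lam1 ∧ θ' 0 2 - θ' 0 5 = -lam1 := by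
      refine ⟨?_, ?_, ?_⟩ <;>
        simp only [hzero, h12, h13, h14, h15, h16] <;> linarith
    have t1 : θ' 1 0 - θ' 1 3 = -lam1 ∧ θ' 1 1 - θ' 1 4 = -lam1 ∧ θ' 1 2 - θ' 1 5 = -lam1 := by
      refine ⟨?_, ?_, ?_⟩ <;>
        simp only [hzero, hskew 1 0, h12, h23, h24, h25, h26] <;> linarith
    have t2 : θ' 2 0 - θ' 2 3 = -lam1 ∧ θ' 2 1 - θ' 2 4 = -lam1 ∧ θ' 2 2 - θ' 2 5 = -lam1 := by
      refine ⟨?_, ?_, ?_⟩ <;>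
        simp only [hzero, hskew 2 0, hskew 2 1, h13, h23, h34, h35, h36] <;> linarith
    have t3 : θ' 3 0 - θ' 3 3 = -lam1 ∧ θ' 3 1 - θ' 3 4 = -lam1 ∧ θ' 3 2 - θ' 3 5 = -lam1 := by
      refine ⟨?_, ?_, ?_⟩ <;>
        simp only [hzero, hskew 3 0, hskew 3 1, hskew 3 2, h14, h24, h34, h45, h46] <;> linarith
    have t4 : θ' 4 0 - θ' 4 3 = -lam1 ∧ θ' 4 1 - θ' 4 4 = -lam1 ∧ θ' 4 2 - θ' 4 5 = -lam1 := by
      refine ⟨?_, ?_, ?_⟩ <;>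
        simp only [hzero, hskew 4 0, hskew 4 1, hskew 4 2, hskew 4 3, h15, h25, h35, h45, h56] <;>
        linarith
    have t5 : θ' 5 0 - θ' 5 3 = -lam1 ∧ θ' 5 1 - θ' 5 4 = -lam1 ∧ θ' 5 2 - θ' 5 5 = -lam1 := by
      refine ⟨?_, ?_, ?_⟩ <;>
        simp only [hzero, hskew 5 0, hskew 5 1, hskew 5 2, hskew 5 3, hskew 5 4, h16, h26, h36, h46, h56] <;>
        linarith
    intro j
    fin_cases j
    · exact t0
    · exact t1
    · exact t2
    · exact t3
    · exact t4
    · exact t5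
  have hws : star w = z 3 * star (z 0) + z 4 * star (z 1) + z 5 * star (z 2) := by
    rw [hw]
    simp [star_add, star_mul]
  have hZW : ∀ j, z j * w = c (-lam1) • (w * z j) := by
    intro j
    obtain ⟨e1, e2, e3⟩ := table j
    rw [hw, mul_add, mul_add, add_mul, add_mul, smul_add, smul_add,
      hterm j 0 3 (by decide), hterm j 1 4 (by decide), hterm j 2 5 (by decide),
      e1, e2, e3]
  have hZWs : ∀ j, z j * star w = c lam1 • (star w * z j) := by
    intro j
    obtain ⟨e1, e2, e3⟩ := table j
    have f1 : θ' j 3 - θ' j 0 = lam1 := by linarith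
    have f2 : θ' j 4 - θ' j 1 = lam1 := by linarith
    have f3 : θ' j 5 - θ' j 2 = lam1 := by linarith
    rw [hws, mul_add, mul_add, add_mul, add_mul, smul_add, smul_add,
      hterm j 3 0 (by decide), hterm j 4 1 (by decide), hterm j 5 2 (by decide),
      f1, f2, f3]
  -- generic combination
  have comb : ∀ (j : Fin 6) (x y : A),
      z j * x = c (-lam1) • (x * z j) → z j * y = c lam1 • (y * z j) →
      z j * (x * y) = (x * y) * z j := by
    intro j x y hx hy
    calc z j * (x * y) = (z j * x) * y := by rw [mul_assoc]
      _ = (c (-lam1) • (x * z j)) * y := by rw [hx]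
      _ = c (-lam1) • (x * (z j * y)) := by rw [smul_mul_assoc, mul_assoc]
      _ = c (-lam1) • (x * (c lam1 • (y * z j))) := by rw [hy]
      _ = (c (-lam1) * c lam1) • ((x * y) * z j) := by
            rw [mul_smul_comm, smul_smul, mul_assoc]
      _ = (x * y) * z j := by rw [hone, one_smul]
  have comb2 : ∀ (j : Fin 6) (x y : A),
      z j * x = c lam1 • (x * z j) → z j * y = c (-lam1) • (y * z j) →
      z j * (x * y) = (x * y) * z j := by
    intro j x y hx hy
    calc z j * (x * y) = (z j * x) * y := by rw [mul_assoc]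
      _ = (c lam1 • (x * z j)) * y := by rw [hx]
      _ = c lam1 • (x * (z j * y)) := by rw [smul_mul_assoc, mul_assoc]
      _ = c lam1 • (x * (c (-lam1) • (y * z j))) := by rw [hy]
      _ = (c lam1 • c (-lam1)) • ((x * y) * z j) := by
            rw [mul_smul_comm, smul_smul, mul_assoc]; norm_num
      _ = (x * y) * z j := by rw [smul_eq_mul, mul_comm, hone, one_smul]
  intro j
  exact ⟨comb j w (star w) (hZW j) (hZWs j), comb2 j (star w) w (hZWs j) (hZW j)⟩
end

section
/- Under the same hypotheses on A, the subalgebra B generated by 1, w, and w* (where w = z₁z₄* + z₂z₅* + z₃z₆*) is commutative. -/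
open Complex Real

lemma ee_neg_exp (t : ℝ) : Complex.exp (-(2 * (Real.pi : ℂ) * Complex.I * (t : ℂ))) = ee (-t) := by
  unfold ee
  congr 1
  push_cast
  ring

section Aux

variable {A : Type*} [Ring A] [StarRing A] [Algebra ℂ A]

lemma starAlg_comm (c : ℂ) (x : A) :
    x * star (algebraMap ℂ A c) = star (algebraMap ℂ A c) * x := by
  have h := congrArg star (Algebra.commutes c (star x))
  rwa [star_mul, star_mul, star_star] at h

lemma starAlg_mul (c d : ℂ) :
    star (algebraMap ℂ A c) * star (algebraMap ℂ A d) = star (algebraMap ℂ A (c * d)) := by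
  rw [← star_mul, ← map_mul, mul_comm d c]

lemma trade_flip (t : ℝ) (Y : A)
    (h : star (algebraMap ℂ A (ee (-t))) * Y = ee t • Y) :
    star (algebraMap ℂ A (ee t)) * Y = ee (-t) • Y := by
  calc star (algebraMap ℂ A (ee t)) * Y
      = ee (-t) • (ee t • (star (algebraMap ℂ A (ee t)) * Y)) := by
        simp [smul_smul, ee_mul, ee_zero]
    _ = ee (-t) • (star (algebraMap ℂ A (ee t)) * (ee t • Y)) := by rw [mul_smul_comm]
    _ = ee (-t) • (star (algebraMap ℂ A (ee t)) * (star (algebraMap ℂ A (ee (-t))) * Y)) := by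
        rw [h]
    _ = ee (-t) • Y := by
        rw [← mul_assoc, starAlg_mul, ee_mul]
        simp [ee_zero]

lemma smul_transport (g : A) (ε δ : ℂ) (X Y : A)
    (h : g * Y = ε • Y) (hXY : X = δ • Y) : g * X = ε • X := by
  rw [hXY, mul_smul_comm, h, smul_comm]

lemma trade_right (c ε : ℂ) (P Y : A)
    (h : star (algebraMap ℂ A c) * Y = ε • Y) :
    star (algebraMap ℂ A c) * (P * Y) = ε • (P * Y) := by
  rw [← mul_assoc, ← starAlg_comm, mul_assoc, h, mul_smul_comm]

lemma trade_mid (c ε : ℂ) (u Y y' : A)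
    (h : star (algebraMap ℂ A c) * Y = ε • Y) :
    star (algebraMap ℂ A c) * (u * (Y * y')) = ε • (u * (Y * y')) := by
  rw [← mul_assoc, ← starAlg_comm, mul_assoc, ← mul_assoc (star (algebraMap ℂ A c)) Y y', h,
    smul_mul_assoc, mul_smul_comm]

lemma master (x y u v : A) (a b d e : ℝ) (c : ℂ)
    (hsum : a + b + d + e = 0)
    (hyu : y * u = ee a • (u * y))
    (hxu : x * u = ee b • (u * x))
    (hyv : y * v = star (algebraMap ℂ A c) * (v * y))
    (hxv : x * v = ee d • (v * x))
    (htrade : star (algebraMap ℂ A c) * (u * (v * (x * y))) = ee e • (u * (v * (x * y)))) :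
    x * y * (u * v) = u * v * (x * y) := by
  have hphi : ∀ s t : A, s * (star (algebraMap ℂ A c) * t) = star (algebraMap ℂ A c) * (s * t) :=
    fun s t => by rw [← mul_assoc, starAlg_comm, mul_assoc]
  calc x * y * (u * v)
      = x * (y * u) * v := by rw [mul_assoc x y (u*v), ← mul_assoc y u v, ← mul_assoc]
    _ = ee a • (x * u * (y * v)) := by
        rw [hyu]; simp only [mul_smul_comm, smul_mul_assoc, mul_assoc]
    _ = ee a • ((ee b • (u * x)) * (star (algebraMap ℂ A c) * (v * y))) := by rw [hxu, hyv]
    _ = (ee a * ee b) • (u * (x * (star (algebraMap ℂ A c) * (v * y)))) := by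
        simp only [smul_mul_assoc, mul_smul_comm, smul_smul, mul_assoc]
    _ = (ee a * ee b) • (star (algebraMap ℂ A c) * (u * (x * (v * y)))) := by
        rw [hphi x, hphi u]
    _ = (ee a * ee b) • (star (algebraMap ℂ A c) * (u * ((ee d • (v * x)) * y))) := by
        rw [← mul_assoc x v y, hxv]
    _ = (ee a * ee b * ee d) • (star (algebraMap ℂ A c) * (u * (v * (x * y)))) := by
        simp only [smul_mul_assoc, mul_smul_comm, smul_smul, mul_assoc]
    _ = (ee a * ee b * ee d) • (ee e • (u * (v * (x * y)))) := by rw [htrade]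
    _ = ee (a + b + d + e) • (u * (v * (x * y))) := by rw [smul_smul, ee_mul, ee_mul, ee_mul]
    _ = u * v * (x * y) := by rw [hsum, ee_zero, one_smul, mul_assoc]

end Aux



/-- the subalgebra B generated by 1, w and w* is commutative. -/
theorem coinvariant_subalgebra_commutative
    {A : Type*} [Ring A] [StarRing A] [Algebra ℂ A]
    (θ' : Fin 6 → Fin 6 → ℝ) (θ lam1 lam2 lam3 : ℝ) (z : Fin 6 → A)
    (hskew : ∀ j k, θ' j k = -θ' k j)
    (hnormal : ∀ j, z j * star (z j) = star (z j) * z j)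
    (hzz : ∀ j k, z j * z k =
      Complex.exp (2 * (Real.pi : ℂ) * Complex.I * (θ' j k : ℂ)) • (z k * z j))
    (hzzs : ∀ j k, j ≠ k → z j * star (z k) =
      Complex.exp (-(2 * (Real.pi : ℂ) * Complex.I * (θ' j k : ℂ))) • (star (z k) * z j))
    (h12 : θ' 0 1 = -θ) (h13 : θ' 0 2 = θ) (h23 : θ' 1 2 = -θ)
    (h45 : θ' 3 4 = -θ) (h46 : θ' 3 5 = θ) (h56 : θ' 4 5 = -θ)
    (h14 : θ' 0 3 = lam1) (h25 : θ' 1 4 = lam1) (h36 : θ' 2 5 = lam1)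
    (h15 : θ' 0 4 = lam2) (h26 : θ' 1 5 = lam2) (h34 : θ' 2 3 = lam2)
    (h16 : θ' 0 5 = lam3) (h24 : θ' 1 3 = lam3) (h35 : θ' 2 4 = lam3)
    (hlam12 : lam1 - lam2 = θ) (hlam13 : -lam1 + lam3 = θ)
    (w : A) (hw : w = z 0 * star (z 3) + z 1 * star (z 4) + z 2 * star (z 5)) :
    ∀ a ∈ Algebra.adjoin ℂ ({w, star w} : Set A),
      ∀ b ∈ Algebra.adjoin ℂ ({w, star w} : Set A), a * b = b * a := by
  -- restated relations
  have hzzE : ∀ j k, z j * z k = ee (θ' j k) • (z k * z j) := fun j k => by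
    unfold ee; exact hzz j k
  have hzzsE : ∀ j k, j ≠ k → z j * star (z k) = ee (-θ' j k) • (star (z k) * z j) :=
    fun j k h => by rw [hzzs j k h, ee_neg_exp]
  have hrev : ∀ j k, j ≠ k → star (z k) * z j = ee (θ' j k) • (z j * star (z k)) :=
    fun j k h => by
      rw [hzzsE j k h, smul_smul, ee_mul]
      simp [ee_zero]
  have hss : ∀ j k : Fin 6, star (z j) * star (z k) =
      star (algebraMap ℂ A (ee (θ' k j))) * (star (z k) * star (z j)) := fun j k => by
    have h := hzzE k j
    rw [Algebra.smul_def] at h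
    have h2 := congrArg star h
    simp only [star_mul] at h2
    rwa [starAlg_comm] at h2
  have hsz : ∀ j k : Fin 6, j ≠ k → z j * star (z k) =
      star (algebraMap ℂ A (ee (-θ' k j))) * (star (z k) * z j) := fun j k h => by
    have h1 := hzzsE k j h.symm
    rw [Algebra.smul_def] at h1
    have h2 := congrArg star h1
    simp only [star_mul, star_star] at h2
    rwa [starAlg_comm] at h2
  have trade0 : ∀ j k : Fin 6, j ≠ k →
      star (algebraMap ℂ A (ee (θ' j k))) * (star (z k) * z j) =
        ee (-θ' j k) • (star (z k) * z j) := fun j k h => by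
    have h1 := (hsz j k h).symm.trans (hzzsE j k h)
    rwa [hskew k j, neg_neg] at h1
  -- off-diagonal swap
  have key : ∀ i j i3 j3 : Fin 6, i ≠ j → i3 ≠ j → j3 ≠ i → j3 ≠ i3 → j ≠ j3 →
      θ' i3 j = -lam1 + θ' i3 j3 →
      θ' i j + θ' j3 i + lam1 = 0 →
      θ' j j3 = lam1 →
      z j3 * star (z j) * (z i * star (z i3)) = z i * star (z i3) * (z j3 * star (z j)) := by
    intro i j i3 j3 hij hi3j hj3i hj3i3 hjj3 hθ hsum hjl
    apply master (z j3) (star (z j)) (z i) (star (z i3))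
      (θ' i j) (θ' j3 i) (-θ' j3 i3) (-θ' i3 j3 + lam1) (ee (θ' i3 j))
    · have := hskew j3 i3; linarith
    · exact hrev i j hij
    · exact hzzE j3 i
    · exact hss j i3
    · exact hzzsE j3 i3 hj3i3
    · -- the trade
      have hA := trade_flip (-θ' j3 i3) (star (z i3) * z j3)
        (by rw [neg_neg]; exact trade0 j3 i3 hj3i3)
      rw [hskew j3 i3, neg_neg] at hA
      -- hA : Φ (ee (θ' i3 j3)) * (star z i3 * z j3) = ee (-θ' i3 j3) • _
      have hAmid := trade_mid (ee (θ' i3 j3)) (ee (-θ' i3 j3)) (z i)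
        (star (z i3) * z j3) (star (z j)) hA
      simp only [mul_assoc] at hAmid
      have hB0 : star (algebraMap ℂ A (ee (θ' j3 j))) * (z j3 * star (z j)) =
          ee (-θ' j3 j) • (z j3 * star (z j)) :=
        smul_transport _ _ _ _ _ (trade0 j3 j hjj3.symm) (hzzsE j3 j hjj3.symm)
      have hl : θ' j3 j = -lam1 := by rw [hskew j3 j, hjl]
      rw [hl, neg_neg] at hB0
      have hBr := trade_right (ee (-lam1)) (ee lam1)
        (z i * star (z i3)) (z j3 * star (z j)) hB0
      simp only [mul_assoc] at hBr
      calc star (algebraMap ℂ A (ee (θ' i3 j))) *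
            (z i * (star (z i3) * (z j3 * star (z j))))
          = star (algebraMap ℂ A (ee (-lam1) * ee (θ' i3 j3))) *
            (z i * (star (z i3) * (z j3 * star (z j)))) := by rw [ee_mul, ← hθ]
        _ = star (algebraMap ℂ A (ee (-lam1))) * (star (algebraMap ℂ A (ee (θ' i3 j3))) *
            (z i * (star (z i3) * (z j3 * star (z j))))) := by rw [← starAlg_mul, mul_assoc]
        _ = star (algebraMap ℂ A (ee (-lam1))) *
            (ee (-θ' i3 j3) • (z i * (star (z i3) * (z j3 * star (z j))))) := by rw [hAmid]
        _ = ee (-θ' i3 j3) • (star (algebraMap ℂ A (ee (-lam1))) *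
            (z i * (star (z i3) * (z j3 * star (z j))))) := by rw [mul_smul_comm]
        _ = ee (-θ' i3 j3) • (ee lam1 • (z i * (star (z i3) * (z j3 * star (z j))))) := by
            rw [hBr]
        _ = ee (-θ' i3 j3 + lam1) • (z i * (star (z i3) * (z j3 * star (z j)))) := by
            rw [smul_smul, ee_mul]
  -- diagonal swap
  have key2 : ∀ i i3 : Fin 6, i ≠ i3 → θ' i i3 = lam1 →
      z i3 * star (z i) * (z i * star (z i3)) = z i * star (z i3) * (z i3 * star (z i)) := by
    intro i i3 hne hl
    apply master (z i3) (star (z i)) (z i) (star (z i3)) 0 (θ' i3 i) 0 lam1 (ee (θ' i3 i))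
    · have := hskew i3 i; linarith
    · rw [ee_zero, one_smul]; exact (hnormal i).symm
    · exact hzzE i3 i
    · exact hss i i3
    · rw [ee_zero, one_smul]; exact hnormal i3
    · have hl2 : θ' i3 i = -lam1 := by rw [hskew i3 i, hl]
      have hB0 : star (algebraMap ℂ A (ee (θ' i3 i))) * (z i3 * star (z i)) =
          ee (-θ' i3 i) • (z i3 * star (z i)) :=
        smul_transport _ _ _ _ _ (trade0 i3 i hne.symm) (hzzsE i3 i hne.symm)
      have hε : ee (-θ' i3 i) = ee lam1 := by rw [hl2, neg_neg]
      rw [hε] at hB0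
      have := trade_right (ee (θ' i3 i)) (ee lam1)
        (z i * star (z i3)) (z i3 * star (z i)) hB0
      simpa only [mul_assoc] using this
  -- the nine commutations
  have k00 := key2 0 3 (by decide) h14
  have k11 := key2 1 4 (by decide) h25
  have k22 := key2 2 5 (by decide) h36
  have k01 := key 0 1 3 4 (by decide) (by decide) (by decide) (by decide) (by decide)
    (by have := hskew 3 1; have := hskew 3 4; linarith [h24, h45, hlam13])
    (by have := hskew 4 0; linarith [h12, h15, hlam12])
    h25
  have k02 := key 0 2 3 5 (by decide) (by decide) (by decide) (by decide) (by decide)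
    (by have := hskew 3 2; have := hskew 3 5; linarith [h34, h46, hlam12])
    (by have := hskew 5 0; linarith [h13, h16, hlam13])
    h36
  have k10 := key 1 0 4 3 (by decide) (by decide) (by decide) (by decide) (by decide)
    (by have := hskew 4 0; have := hskew 4 3; linarith [h15, h45, hlam12])
    (by have := hskew 3 1; have := hskew 1 0; linarith [h12, h24, hlam13])
    h14
  have k12 := key 1 2 4 5 (by decide) (by decide) (by decide) (by decide) (by decide)
    (by have := hskew 4 2; have := hskew 4 5; linarith [h35, h56, hlam13])
    (by have := hskew 5 1; linarith [h23, h26, hlam12])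
    h36
  have k20 := key 2 0 5 3 (by decide) (by decide) (by decide) (by decide) (by decide)
    (by have := hskew 5 0; have := hskew 5 3; linarith [h16, h46, hlam13])
    (by have := hskew 3 2; have := hskew 2 0; linarith [h13, h34, hlam12])
    h14
  have k21 := key 2 1 5 4 (by decide) (by decide) (by decide) (by decide) (by decide)
    (by have := hskew 5 1; have := hskew 5 4; linarith [h26, h56, hlam12])
    (by have := hskew 4 2; have := hskew 2 1; linarith [h23, h35, hlam13])
    h25
  -- w commutes with star w
  have hws : star w = z 3 * star (z 0) + z 4 * star (z 1) + z 5 * star (z 2) := by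
    rw [hw, star_add, star_add, star_mul, star_mul, star_mul, star_star, star_star, star_star]
  have hcomm : w * star w = star w * w := by
    rw [hws, hw]
    simp only [add_mul, mul_add]
    rw [k00, k01, k02, k10, k11, k12, k20, k21, k22]
    abel
  -- conclude by induction on the adjoined algebra
  intro a ha b hb
  refine Algebra.adjoin_induction₂
    (p := fun x y _ _ => x * y = y * x) ?_ ?_ ?_ ?_ ?_ ?_ ?_ ?_ ha hb
  · intro x y hx hy
    simp only [Set.mem_insert_iff, Set.mem_singleton_iff] at hx hy
    rcases hx with rfl | rfl <;> rcases hy with rfl | rfl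
    · rfl
    · exact hcomm
    · exact hcomm.symm
    · rfl
  · exact fun r₁ r₂ => Algebra.commutes r₁ _
  · exact fun r x _ => Algebra.commutes r x
  · exact fun r x _ => (Algebra.commutes r x).symm
  · intro x y zz hx hy hz h1 h2
    have h1' : x * zz = zz * x := h1
    have h2' : y * zz = zz * y := h2
    show (x + y) * zz = zz * (x + y)
    rw [add_mul, mul_add, h1', h2']
  · intro x y zz hx hy hz h1 h2
    have h1' : x * y = y * x := h1
    have h2' : x * zz = zz * x := h2
    show x * (y + zz) = (y + zz) * x
    rw [mul_add, add_mul, h1', h2']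
  · intro x y zz hx hy hz h1 h2
    have h1' : x * zz = zz * x := h1
    have h2' : y * zz = zz * y := h2
    show x * y * zz = zz * (x * y)
    rw [mul_assoc, h2', ← mul_assoc, h1', mul_assoc]
  · intro x y zz hx hy hz h1 h2
    have h1' : x * y = y * x := h1
    have h2' : x * zz = zz * x := h2
    show x * (y * zz) = y * zz * x
    rw [← mul_assoc, h1', mul_assoc, h2', ← mul_assoc]
end

section
/- With the notation of the previous statement, the 3×3 matrix p = v v*, where v = (Z₁ | Z₂) is the 3×2 matrix with columns Z₁ and Z₂, is a projection: p² = p and p* = p; moreover its trace satisfies tr(p) = 2. -/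
open Complex Real

noncomputable abbrev instEph (t : ℝ) : ℂ := Complex.exp (2 * (Real.pi : ℂ) * Complex.I * (t : ℂ))

lemma instEph_mul (s t : ℝ) : instEph s * instEph t = instEph (s + t) := by
  rw [← Complex.exp_add]; congr 1; push_cast; ring

lemma instEph_zero : instEph 0 = 1 := by
  show Complex.exp _ = 1
  norm_num

lemma instEph_smul {A : Type*} [AddCommMonoid A] [Module ℂ A] (s t : ℝ) (x : A) :
    instEph s • instEph t • x = instEph (s + t) • x := by rw [smul_smul, instEph_mul]

lemma instEph_cancel {A : Type*} [AddCommMonoid A] [Module ℂ A] (s : ℝ) (x : A) :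
    instEph s • instEph (-s) • x = x := by
  rw [instEph_smul]
  have h : s + -s = 0 := by ring
  rw [h, instEph_zero, one_smul]

lemma instEph_cancel' {A : Type*} [AddCommMonoid A] [Module ℂ A] (s : ℝ) (x : A) :
    instEph (-s) • instEph s • x = x := by
  rw [instEph_smul]
  have h : -s + s = 0 := by ring
  rw [h, instEph_zero, one_smul]

lemma instEph_inv {A : Type*} [AddCommMonoid A] [Module ℂ A] {s : ℝ} {x y : A}
    (h : x = instEph s • y) : y = instEph (-s) • x := by
  rw [h, show instEph s = instEph (-(-s)) by rw [neg_neg], instEph_cancel]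

lemma instSwap3 {A : Type*} [Ring A] [Algebra ℂ A] (x y v : A) (c d : ℂ)
    (h1 : x * y = c • (y * x)) (h2 : x * v = d • (v * x)) :
    x * (y * v) = (c * d) • (y * v * x) := by
  rw [← mul_assoc, h1, smul_mul_assoc, mul_assoc, h2, mul_smul_comm, smul_smul, mul_assoc]

lemma instWcomm {A : Type*} [Ring A] [Algebra ℂ A] (x t0 t1 t2 : A) (c : ℂ)
    (h0 : x * t0 = c • (t0 * x)) (h1 : x * t1 = c • (t1 * x)) (h2 : x * t2 = c • (t2 * x)) :
    x * (t0 + t1 + t2) = c • ((t0 + t1 + t2) * x) := by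
  rw [mul_add, mul_add, h0, h1, h2, ← smul_add, ← smul_add, add_mul, add_mul]

lemma instExpand {A : Type*} [Ring A] (s1 s2 t1 t2 : A) :
    (s1 - s2) * (t1 - t2) = s1 * t1 - s1 * t2 - s2 * t1 + s2 * t2 := by noncomm_ring

lemma instGrp {A : Type*} [AddCommGroup A] [Module ℂ A] (c d : ℂ) (x0 x1 x2 y0 y1 y2 : A) :
    (c • x0 - d • y0) + (c • x1 - d • y1) + (c • x2 - d • y2)
      = c • (x0 + x1 + x2) - d • (y0 + y1 + y2) := by
  rw [smul_add, smul_add, smul_add, smul_add]; abel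

/-- the matrix p = v v*, v = (Z₁ | Z₂), is a projection (p² = p, p* = p)
with trace 2. -/
theorem instanton_projection
    {A : Type*} [Ring A] [StarRing A] [Algebra ℂ A]
    (θ' : Fin 6 → Fin 6 → ℝ) (θ lam1 lam2 lam3 : ℝ) (z : Fin 6 → A)
    (hskew : ∀ j k, θ' j k = -θ' k j)
    (hnormal : ∀ j, z j * star (z j) = star (z j) * z j)
    (hzz : ∀ j k, z j * z k =
      Complex.exp (2 * (Real.pi : ℂ) * Complex.I * (θ' j k : ℂ)) • (z k * z j))
    (hzzs : ∀ j k, j ≠ k → z j * star (z k) =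
      Complex.exp (-(2 * (Real.pi : ℂ) * Complex.I * (θ' j k : ℂ))) • (star (z k) * z j))
    (h12 : θ' 0 1 = -θ) (h13 : θ' 0 2 = θ) (h23 : θ' 1 2 = -θ)
    (h45 : θ' 3 4 = -θ) (h46 : θ' 3 5 = θ) (h56 : θ' 4 5 = -θ)
    (h14 : θ' 0 3 = lam1) (h25 : θ' 1 4 = lam1) (h36 : θ' 2 5 = lam1)
    (h15 : θ' 0 4 = lam2) (h26 : θ' 1 5 = lam2) (h34 : θ' 2 3 = lam2)
    (h16 : θ' 0 5 = lam3) (h24 : θ' 1 3 = lam3) (h35 : θ' 2 4 = lam3)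
    (hlam12 : lam1 - lam2 = θ) (hlam13 : -lam1 + lam3 = θ)
    (hsph1 : z 0 * star (z 0) + z 1 * star (z 1) + z 2 * star (z 2) = 1)
    (hsph2 : z 3 * star (z 3) + z 4 * star (z 4) + z 5 * star (z 5) = 1)
    (w : A) (hw : w = z 0 * star (z 3) + z 1 * star (z 4) + z 2 * star (z 5))
    (Q : A) (hQcentral : ∀ a : A, Q * a = a * Q)
    (hQ1 : Q * (1 - w * star w) = 1) (hQ2 : (1 - w * star w) * Q = 1)
    (Z : Fin 2 → Fin 3 → A)
    (hZ0 : ∀ m : Fin 3, Z 0 m = z ⟨m.val, by have := m.isLt; omega⟩)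
    (hZ1 : ∀ m : Fin 3, Z 1 m =
      (z ⟨m.val + 3, by have := m.isLt; omega⟩ -
        Complex.exp (2 * (Real.pi : ℂ) * Complex.I * (lam1 : ℂ)) •
          (z ⟨m.val, by have := m.isLt; omega⟩ * star w)) * Q)
    (horth : ∀ j k : Fin 2, ∑ m : Fin 3, star (Z j m) * Z k m = if j = k then (1 : A) else 0)
    (p : Matrix (Fin 3) (Fin 3) A)
    (hp : p = Matrix.of fun m n => Z 0 m * star (Z 0 n) + Z 1 m * star (Z 1 n)) :
    p * p = p ∧ p.conjTranspose = p ∧ p.trace = 2 := by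
  subst hp
  -- normalized forms of Z
  have hZ00 : Z 0 0 = z 0 := hZ0 0
  have hZ01 : Z 0 1 = z 1 := hZ0 1
  have hZ02 : Z 0 2 = z 2 := hZ0 2
  have hZ10 : Z 1 0 = (z 3 - instEph lam1 • (z 0 * star w)) * Q := hZ1 0
  have hZ11 : Z 1 1 = (z 4 - instEph lam1 • (z 1 * star w)) * Q := hZ1 1
  have hZ12 : Z 1 2 = (z 5 - instEph lam1 • (z 2 * star w)) * Q := hZ1 2
  -- general swap lemmas
  have hzzsAll : ∀ j k, z j * star (z k) = instEph (-(θ' j k)) • (star (z k) * z j) := by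
    intro j k
    by_cases h : j = k
    · subst h
      have h0 : θ' j j = 0 := by have := hskew j j; linarith
      rw [h0, neg_zero, instEph_zero, one_smul]
      exact hnormal j
    · rw [hzzs j k h]
      congr 1
      show Complex.exp _ = Complex.exp _
      congr 1
      push_cast
      ring
  have swapT : ∀ (x y v : A) (a b t : ℝ), x * y = instEph a • (y * x) →
      x * v = instEph b • (v * x) → a + b = t → x * (y * v) = instEph t • (y * v * x) := by
    intro x y v a b t h1 h2 h3
    rw [instSwap3 x y v _ _ h1 h2, instEph_mul, h3]
  -- star of w
  have hsw : star w = z 3 * star (z 0) + z 4 * star (z 1) + z 5 * star (z 2) := by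
    rw [hw]; simp [star_add, star_mul, star_star]
  -- w commutation with each z j
  have hzw0 : z 0 * w = instEph (-lam1) • (w * z 0) := by
    rw [hw]
    refine instWcomm _ _ _ _ _ ?_ ?_ ?_
    · exact swapT _ _ _ _ _ _ (hzz 0 0) (hzzsAll 0 3) (by rw [h14]; have := hskew 0 0; linarith)
    · exact swapT _ _ _ _ _ _ (hzz 0 1) (hzzsAll 0 4) (by rw [h12, h15]; linarith)
    · exact swapT _ _ _ _ _ _ (hzz 0 2) (hzzsAll 0 5) (by rw [h13, h16]; linarith)
  have hzw1 : z 1 * w = instEph (-lam1) • (w * z 1) := by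
    rw [hw]
    refine instWcomm _ _ _ _ _ ?_ ?_ ?_
    · exact swapT _ _ _ _ _ _ (hzz 1 0) (hzzsAll 1 3)
        (by rw [hskew 1 0, h12, h24]; linarith)
    · exact swapT _ _ _ _ _ _ (hzz 1 1) (hzzsAll 1 4)
        (by rw [h25]; have := hskew 1 1; linarith)
    · exact swapT _ _ _ _ _ _ (hzz 1 2) (hzzsAll 1 5) (by rw [h23, h26]; linarith)
  have hzw2 : z 2 * w = instEph (-lam1) • (w * z 2) := by
    rw [hw]
    refine instWcomm _ _ _ _ _ ?_ ?_ ?_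
    · exact swapT _ _ _ _ _ _ (hzz 2 0) (hzzsAll 2 3)
        (by rw [hskew 2 0, h13, h34]; linarith)
    · exact swapT _ _ _ _ _ _ (hzz 2 1) (hzzsAll 2 4)
        (by rw [hskew 2 1, h23, h35]; linarith)
    · exact swapT _ _ _ _ _ _ (hzz 2 2) (hzzsAll 2 5)
        (by rw [h36]; have := hskew 2 2; linarith)
  have hzw3 : z 3 * w = instEph (-lam1) • (w * z 3) := by
    rw [hw]
    refine instWcomm _ _ _ _ _ ?_ ?_ ?_
    · exact swapT _ _ _ _ _ _ (hzz 3 0) (hzzsAll 3 3)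
        (by rw [hskew 3 0, h14]; have := hskew 3 3; linarith)
    · exact swapT _ _ _ _ _ _ (hzz 3 1) (hzzsAll 3 4)
        (by rw [hskew 3 1, h24, h45]; linarith)
    · exact swapT _ _ _ _ _ _ (hzz 3 2) (hzzsAll 3 5)
        (by rw [hskew 3 2, h34, h46]; linarith)
  have hzw4 : z 4 * w = instEph (-lam1) • (w * z 4) := by
    rw [hw]
    refine instWcomm _ _ _ _ _ ?_ ?_ ?_
    · exact swapT _ _ _ _ _ _ (hzz 4 0) (hzzsAll 4 3)
        (by rw [hskew 4 0, h15, hskew 4 3, h45]; linarith)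
    · exact swapT _ _ _ _ _ _ (hzz 4 1) (hzzsAll 4 4)
        (by rw [hskew 4 1, h25]; have := hskew 4 4; linarith)
    · exact swapT _ _ _ _ _ _ (hzz 4 2) (hzzsAll 4 5)
        (by rw [hskew 4 2, h35, h56]; linarith)
  have hzw5 : z 5 * w = instEph (-lam1) • (w * z 5) := by
    rw [hw]
    refine instWcomm _ _ _ _ _ ?_ ?_ ?_
    · exact swapT _ _ _ _ _ _ (hzz 5 0) (hzzsAll 5 3)
        (by rw [hskew 5 0, h16, hskew 5 3, h46]; linarith)
    · exact swapT _ _ _ _ _ _ (hzz 5 1) (hzzsAll 5 4)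
        (by rw [hskew 5 1, h26, hskew 5 4, h56]; linarith)
    · exact swapT _ _ _ _ _ _ (hzz 5 2) (hzzsAll 5 5)
        (by rw [hskew 5 2, h36]; have := hskew 5 5; linarith)
  -- star-w commutation with z 0, z 1, z 2
  have hzsw0 : z 0 * star w = instEph lam1 • (star w * z 0) := by
    rw [hsw]
    refine instWcomm _ _ _ _ _ ?_ ?_ ?_
    · exact swapT _ _ _ _ _ _ (hzz 0 3) (hzzsAll 0 0)
        (by rw [h14]; have := hskew 0 0; linarith)
    · exact swapT _ _ _ _ _ _ (hzz 0 4) (hzzsAll 0 1) (by rw [h15, h12]; linarith)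
    · exact swapT _ _ _ _ _ _ (hzz 0 5) (hzzsAll 0 2) (by rw [h16, h13]; linarith)
  have hzsw1 : z 1 * star w = instEph lam1 • (star w * z 1) := by
    rw [hsw]
    refine instWcomm _ _ _ _ _ ?_ ?_ ?_
    · exact swapT _ _ _ _ _ _ (hzz 1 3) (hzzsAll 1 0)
        (by rw [h24, hskew 1 0, h12]; linarith)
    · exact swapT _ _ _ _ _ _ (hzz 1 4) (hzzsAll 1 1)
        (by rw [h25]; have := hskew 1 1; linarith)
    · exact swapT _ _ _ _ _ _ (hzz 1 5) (hzzsAll 1 2) (by rw [h26, h23]; linarith)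
  have hzsw2 : z 2 * star w = instEph lam1 • (star w * z 2) := by
    rw [hsw]
    refine instWcomm _ _ _ _ _ ?_ ?_ ?_
    · exact swapT _ _ _ _ _ _ (hzz 2 3) (hzzsAll 2 0)
        (by rw [h34, hskew 2 0, h13]; linarith)
    · exact swapT _ _ _ _ _ _ (hzz 2 4) (hzzsAll 2 1)
        (by rw [h35, hskew 2 1, h23]; linarith)
    · exact swapT _ _ _ _ _ _ (hzz 2 5) (hzzsAll 2 2)
        (by rw [h36]; have := hskew 2 2; linarith)
  -- inverted forms
  have hwz0 : w * z 0 = instEph lam1 • (z 0 * w) := by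
    have h := instEph_inv hzw0; rwa [neg_neg] at h
  have hwz1 : w * z 1 = instEph lam1 • (z 1 * w) := by
    have h := instEph_inv hzw1; rwa [neg_neg] at h
  have hwz2 : w * z 2 = instEph lam1 • (z 2 * w) := by
    have h := instEph_inv hzw2; rwa [neg_neg] at h
  have hwz3 : w * z 3 = instEph lam1 • (z 3 * w) := by
    have h := instEph_inv hzw3; rwa [neg_neg] at h
  have hwz4 : w * z 4 = instEph lam1 • (z 4 * w) := by
    have h := instEph_inv hzw4; rwa [neg_neg] at h
  have hwz5 : w * z 5 = instEph lam1 • (z 5 * w) := by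
    have h := instEph_inv hzw5; rwa [neg_neg] at h
  have hswz0 : star w * z 0 = instEph (-lam1) • (z 0 * star w) := instEph_inv hzsw0
  have hswz1 : star w * z 1 = instEph (-lam1) • (z 1 * star w) := instEph_inv hzsw1
  have hswz2 : star w * z 2 = instEph (-lam1) • (z 2 * star w) := instEph_inv hzsw2
  -- S-lemmas
  have hS1_0 : star (z 0) * z 3 = instEph (-lam1) • (z 3 * star (z 0)) := by
    have h := hzzsAll 3 0
    rw [show -(θ' 3 0) = lam1 by rw [hskew 3 0, h14]; ring] at h
    exact instEph_inv h
  have hS1_1 : star (z 1) * z 4 = instEph (-lam1) • (z 4 * star (z 1)) := by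
    have h := hzzsAll 4 1
    rw [show -(θ' 4 1) = lam1 by rw [hskew 4 1, h25]; ring] at h
    exact instEph_inv h
  have hS1_2 : star (z 2) * z 5 = instEph (-lam1) • (z 5 * star (z 2)) := by
    have h := hzzsAll 5 2
    rw [show -(θ' 5 2) = lam1 by rw [hskew 5 2, h36]; ring] at h
    exact instEph_inv h
  have hS2_0 : star (z 3) * z 0 = instEph lam1 • (z 0 * star (z 3)) := by
    have h := hzzsAll 0 3
    rw [show -(θ' 0 3) = -lam1 by rw [h14]] at h
    have h2 := instEph_inv h; rwa [neg_neg] at h2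
  have hS2_1 : star (z 4) * z 1 = instEph lam1 • (z 1 * star (z 4)) := by
    have h := hzzsAll 1 4
    rw [show -(θ' 1 4) = -lam1 by rw [h25]] at h
    have h2 := instEph_inv h; rwa [neg_neg] at h2
  have hS2_2 : star (z 5) * z 2 = instEph lam1 • (z 2 * star (z 5)) := by
    have h := hzzsAll 2 5
    rw [show -(θ' 2 5) = -lam1 by rw [h36]] at h
    have h2 := instEph_inv h; rwa [neg_neg] at h2
  -- Q facts
  have hQr : ∀ c : A, c * Q = 0 → c = 0 := by
    intro c hc
    have h : c * (Q * (1 - w * star w)) = 0 := by rw [← mul_assoc, hc, zero_mul]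
    rwa [hQ1, mul_one] at h
  have hQs1 : (1 - w * star w) * star Q = 1 := by
    have h := congrArg star hQ1
    rw [star_mul, star_one, star_sub, star_one, star_mul, star_star] at h
    exact h
  have hstarQ : star Q = Q := by
    calc star Q = (Q * (1 - w * star w)) * star Q := by rw [hQ1, one_mul]
      _ = Q * ((1 - w * star w) * star Q) := by rw [mul_assoc]
      _ = Q := by rw [hQs1, mul_one]
  -- orthogonality (0,1) gives phase absorption
  have c0 : star (z 0) * (z 3 - instEph lam1 • (z 0 * star w)) =
      instEph (-lam1) • (z 3 * star (z 0)) - instEph lam1 • (z 0 * star (z 0) * star w) := by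
    rw [mul_sub, hS1_0, mul_smul_comm, ← mul_assoc, ← hnormal 0]
  have c1 : star (z 1) * (z 4 - instEph lam1 • (z 1 * star w)) =
      instEph (-lam1) • (z 4 * star (z 1)) - instEph lam1 • (z 1 * star (z 1) * star w) := by
    rw [mul_sub, hS1_1, mul_smul_comm, ← mul_assoc, ← hnormal 1]
  have c2 : star (z 2) * (z 5 - instEph lam1 • (z 2 * star w)) =
      instEph (-lam1) • (z 5 * star (z 2)) - instEph lam1 • (z 2 * star (z 2) * star w) := by
    rw [mul_sub, hS1_2, mul_smul_comm, ← mul_assoc, ← hnormal 2]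
  have hYsum : z 0 * star (z 0) * star w + z 1 * star (z 1) * star w
      + z 2 * star (z 2) * star w = star w := by
    rw [← add_mul, ← add_mul, hsph1, one_mul]
  have habs : instEph (-lam1) • star w = instEph lam1 • star w := by
    have h01 := horth 0 1
    rw [Fin.sum_univ_three, if_neg (by decide : ¬ (0 : Fin 2) = 1),
      hZ00, hZ01, hZ02, hZ10, hZ11, hZ12] at h01
    simp only [← mul_assoc] at h01
    rw [← add_mul, ← add_mul] at h01
    have hC := hQr _ h01
    rw [c0, c1, c2, instGrp, ← hsw, hYsum] at hC
    exact sub_eq_zero.mp hC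
  -- absorb the exponential in Z 1
  have hKey0 : instEph lam1 • (z 0 * star w) = star w * z 0 := by
    rw [hzsw0, ← smul_mul_assoc, ← smul_mul_assoc, ← habs, instEph_cancel]
  have hKey1 : instEph lam1 • (z 1 * star w) = star w * z 1 := by
    rw [hzsw1, ← smul_mul_assoc, ← smul_mul_assoc, ← habs, instEph_cancel]
  have hKey2 : instEph lam1 • (z 2 * star w) = star w * z 2 := by
    rw [hzsw2, ← smul_mul_assoc, ← smul_mul_assoc, ← habs, instEph_cancel]
  have hx0 : Z 1 0 = (z 3 - star w * z 0) * Q := by rw [hZ10, hKey0]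
  have hx1 : Z 1 1 = (z 4 - star w * z 1) * Q := by rw [hZ11, hKey1]
  have hx2 : Z 1 2 = (z 5 - star w * z 2) * Q := by rw [hZ12, hKey2]
  have hxs0 : star (Z 1 0) = Q * (star (z 3) - star (z 0) * w) := by
    rw [hx0, star_mul, hstarQ, star_sub, star_mul, star_star]
  have hxs1 : star (Z 1 1) = Q * (star (z 4) - star (z 1) * w) := by
    rw [hx1, star_mul, hstarQ, star_sub, star_mul, star_star]
  have hxs2 : star (Z 1 2) = Q * (star (z 5) - star (z 2) * w) := by
    rw [hx2, star_mul, hstarQ, star_sub, star_mul, star_star]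
  -- sum of x * star x
  have hsum1 : (z 3 - star w * z 0) * (star (z 3) - star (z 0) * w)
      + (z 4 - star w * z 1) * (star (z 4) - star (z 1) * w)
      + (z 5 - star w * z 2) * (star (z 5) - star (z 2) * w) = 1 - star w * w := by
    have e1 : z 3 * (star (z 0) * w) + z 4 * (star (z 1) * w) + z 5 * (star (z 2) * w)
        = star w * w := by
      simp only [← mul_assoc]
      rw [← add_mul, ← add_mul, hsw]
    have e2 : star w * z 0 * star (z 3) + star w * z 1 * star (z 4)
        + star w * z 2 * star (z 5) = star w * w := by
      simp only [mul_assoc]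
      rw [← mul_add, ← mul_add, ← hw]
    have e3' : z 0 * star (z 0) * w + z 1 * star (z 1) * w + z 2 * star (z 2) * w = w := by
      rw [← add_mul, ← add_mul, hsph1, one_mul]
    have tt : ∀ u a b c : A, (u * a) * (b * c) = u * (a * b * c) := by
      intro u a b c; noncomm_ring
    have e3 : star w * z 0 * (star (z 0) * w) + star w * z 1 * (star (z 1) * w)
        + star w * z 2 * (star (z 2) * w) = star w * w := by
      rw [tt, tt, tt, ← mul_add, ← mul_add, e3']
    rw [instExpand, instExpand, instExpand]
    have regroup : ∀ a0 a1 a2 b0 b1 b2 c0 c1 c2 d0 d1 d2 : A,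
        (a0 - b0 - c0 + d0) + (a1 - b1 - c1 + d1) + (a2 - b2 - c2 + d2)
          = (a0 + a1 + a2) - (b0 + b1 + b2) - (c0 + c1 + c2) + (d0 + d1 + d2) := by
      intros; abel
    rw [regroup, hsph2, e1, e2, e3]
    abel
  -- sum of star x * x
  have T2_0 : star (z 3) * (star w * z 0) = z 0 * star (z 3) * star w := by
    rw [hswz0, mul_smul_comm, ← mul_assoc, hS2_0, smul_mul_assoc, instEph_cancel']
  have T2_1 : star (z 4) * (star w * z 1) = z 1 * star (z 4) * star w := by
    rw [hswz1, mul_smul_comm, ← mul_assoc, hS2_1, smul_mul_assoc, instEph_cancel']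
  have T2_2 : star (z 5) * (star w * z 2) = z 2 * star (z 5) * star w := by
    rw [hswz2, mul_smul_comm, ← mul_assoc, hS2_2, smul_mul_assoc, instEph_cancel']
  have T3_0 : star (z 0) * w * z 3 = z 3 * star (z 0) * w := by
    rw [mul_assoc, hwz3, mul_smul_comm, ← mul_assoc, hS1_0, smul_mul_assoc, instEph_cancel]
  have T3_1 : star (z 1) * w * z 4 = z 4 * star (z 1) * w := by
    rw [mul_assoc, hwz4, mul_smul_comm, ← mul_assoc, hS1_1, smul_mul_assoc, instEph_cancel]
  have T3_2 : star (z 2) * w * z 5 = z 5 * star (z 2) * w := by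
    rw [mul_assoc, hwz5, mul_smul_comm, ← mul_assoc, hS1_2, smul_mul_assoc, instEph_cancel]
  have T4_0 : star (z 0) * w * (star w * z 0) = z 0 * star (z 0) * (w * star w) := by
    rw [mul_assoc, hswz0, mul_smul_comm, mul_smul_comm, ← mul_assoc w (z 0) (star w),
      hwz0, smul_mul_assoc, mul_smul_comm, instEph_cancel',
      show star (z 0) * (z 0 * w * star w) = star (z 0) * z 0 * (w * star w) by noncomm_ring,
      ← hnormal 0]
  have T4_1 : star (z 1) * w * (star w * z 1) = z 1 * star (z 1) * (w * star w) := by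
    rw [mul_assoc, hswz1, mul_smul_comm, mul_smul_comm, ← mul_assoc w (z 1) (star w),
      hwz1, smul_mul_assoc, mul_smul_comm, instEph_cancel',
      show star (z 1) * (z 1 * w * star w) = star (z 1) * z 1 * (w * star w) by noncomm_ring,
      ← hnormal 1]
  have T4_2 : star (z 2) * w * (star w * z 2) = z 2 * star (z 2) * (w * star w) := by
    rw [mul_assoc, hswz2, mul_smul_comm, mul_smul_comm, ← mul_assoc w (z 2) (star w),
      hwz2, smul_mul_assoc, mul_smul_comm, instEph_cancel',
      show star (z 2) * (z 2 * w * star w) = star (z 2) * z 2 * (w * star w) by noncomm_ring,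
      ← hnormal 2]
  have hsum2 : (star (z 3) - star (z 0) * w) * (z 3 - star w * z 0)
      + (star (z 4) - star (z 1) * w) * (z 4 - star w * z 1)
      + (star (z 5) - star (z 2) * w) * (z 5 - star w * z 2) = 1 - star w * w := by
    have f1 : star (z 3) * z 3 + star (z 4) * z 4 + star (z 5) * z 5 = 1 := by
      rw [← hnormal 3, ← hnormal 4, ← hnormal 5, hsph2]
    have f2 : z 0 * star (z 3) * star w + z 1 * star (z 4) * star w
        + z 2 * star (z 5) * star w = w * star w := by
      rw [← add_mul, ← add_mul, ← hw]
    have f3 : z 3 * star (z 0) * w + z 4 * star (z 1) * w + z 5 * star (z 2) * w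
        = star w * w := by
      rw [← add_mul, ← add_mul, ← hsw]
    have f4 : z 0 * star (z 0) * (w * star w) + z 1 * star (z 1) * (w * star w)
        + z 2 * star (z 2) * (w * star w) = w * star w := by
      rw [← add_mul, ← add_mul, hsph1, one_mul]
    rw [instExpand, instExpand, instExpand]
    have regroup : ∀ a0 a1 a2 b0 b1 b2 c0 c1 c2 d0 d1 d2 : A,
        (a0 - b0 - c0 + d0) + (a1 - b1 - c1 + d1) + (a2 - b2 - c2 + d2)
          = (a0 + a1 + a2) - (b0 + b1 + b2) - (c0 + c1 + c2) + (d0 + d1 + d2) := by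
      intros; abel
    rw [regroup, T2_0, T2_1, T2_2, T3_0, T3_1, T3_2, T4_0, T4_1, T4_2, f1, f2, f3, f4]
    abel
  -- Q manipulation
  have hQQ : ∀ c d : A, (c * Q) * (Q * d) = Q * Q * (c * d) := by
    intro c d
    calc c * Q * (Q * d) = Q * c * (Q * d) := by rw [← hQcentral c]
      _ = Q * (c * Q) * d := by rw [mul_assoc Q c (Q * d), ← mul_assoc c Q d, ← mul_assoc]
      _ = Q * (Q * c) * d := by rw [← hQcentral c]
      _ = Q * Q * (c * d) := by rw [← mul_assoc Q Q c, mul_assoc]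
  have hQQ' : ∀ c d : A, (Q * c) * (d * Q) = Q * Q * (c * d) := by
    intro c d
    rw [mul_assoc Q c (d * Q), ← mul_assoc c d Q, ← hQcentral (c * d), ← mul_assoc]
  -- the (1,1) orthogonality relation
  have h11 : Q * Q * (1 - star w * w) = 1 := by
    have h := horth 1 1
    rw [Fin.sum_univ_three, if_pos rfl, hxs0, hxs1, hxs2, hx0, hx1, hx2,
      hQQ', hQQ', hQQ', ← mul_add, ← mul_add, hsum2] at h
    exact h
  -- trace of the Z1 part
  have htr2 : Z 1 0 * star (Z 1 0) + Z 1 1 * star (Z 1 1) + Z 1 2 * star (Z 1 2) = 1 := by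
    rw [hxs0, hxs1, hxs2, hx0, hx1, hx2, hQQ, hQQ, hQQ, ← mul_add, ← mul_add, hsum1, h11]
  -- orthogonality in summed form
  have horthKey : ∀ (j l : Fin 2) (m n : Fin 3),
      ∑ k : Fin 3, Z j m * star (Z j k) * (Z l k * star (Z l n))
        = if j = l then Z j m * star (Z l n) else 0 := by
    intro j l m n
    have e : ∀ k : Fin 3, Z j m * star (Z j k) * (Z l k * star (Z l n))
        = Z j m * ((star (Z j k) * Z l k) * star (Z l n)) := by
      intro k; noncomm_ring
    rw [Finset.sum_congr rfl (fun k _ => e k), ← Finset.mul_sum, ← Finset.sum_mul, horth j l]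
    split_ifs with h
    · rw [one_mul]
    · rw [zero_mul, mul_zero]
  refine ⟨?_, ?_, ?_⟩
  · ext m n
    rw [Matrix.mul_apply]
    simp only [Matrix.of_apply]
    have expand : ∀ k : Fin 3,
        (Z 0 m * star (Z 0 k) + Z 1 m * star (Z 1 k))
          * (Z 0 k * star (Z 0 n) + Z 1 k * star (Z 1 n))
        = Z 0 m * star (Z 0 k) * (Z 0 k * star (Z 0 n))
          + Z 0 m * star (Z 0 k) * (Z 1 k * star (Z 1 n))
          + Z 1 m * star (Z 1 k) * (Z 0 k * star (Z 0 n))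
          + Z 1 m * star (Z 1 k) * (Z 1 k * star (Z 1 n)) := by
      intro k; noncomm_ring
    rw [Finset.sum_congr rfl (fun k _ => expand k)]
    rw [Finset.sum_add_distrib, Finset.sum_add_distrib, Finset.sum_add_distrib,
      horthKey 0 0 m n, horthKey 0 1 m n, horthKey 1 0 m n, horthKey 1 1 m n]
    norm_num
  · ext m n
    simp only [Matrix.conjTranspose_apply, Matrix.of_apply, star_add, star_mul, star_star]
  · rw [Matrix.trace]
    rw [Fin.sum_univ_three]
    simp only [Matrix.diag_apply, Matrix.of_apply]
    rw [hZ00, hZ01, hZ02]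
    have regroup2 : ∀ a0 a1 a2 b0 b1 b2 : A,
        (a0 + b0) + (a1 + b1) + (a2 + b2) = (a0 + a1 + a2) + (b0 + b1 + b2) := by
      intros; abel
    rw [regroup2, hsph1, htr2]
    norm_num
end
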